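/- Let n ≥ 3 and let w ∈ Área_n. (i) If ℓ(w·t) > ℓ(w) and w·t ∈ Área_n, then s_1 ∈ Des(w) and Des(w·t) = (Des(w) ∪ {t}) \ {s_1}. (ii) For 1 ≤ i ≤ n−2, if ℓ(w·s_i) > ℓ(w) and w·s_i ∈ Área_n, then s_{i+1} ∈ Des(w); moreover under these hypotheses Des(w·s_1) = (Des(w) ∪ {s_1}) \ {t, s_2}, and for 2 ≤ i ≤ n−2, Des(w·s_i) = (Des(w) ∪ {s_i}) \ {s_{i+1}}. (iii) If ℓ(w·s_{n−1}) > ℓ(w) and w·s_{n−1} ∈ Área_n, then Des(w·s_{n−1}) = Des(w) ∪ {s_{n−1}}. -/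

import Mathlib

/-!
Twice the Coxeter length of a signed permutation `w` is its number of inversions on the
window `±[n]` plus its number of negative entries among `w(1), …, w(n)`: right multiplication
by a generator changes this statistic by `±2`, with the sign read off the entries it moves,
and every `w ≠ 1` has a generator lowering it. Hence `t` and `s_i` are descents of `w` exactly
when `w(1) < 0` and `w(i+1) < w(i)`, and every claim becomes one about neighbouring entries of
the row forms of `w` and `w·g`. These are pinned down by `Área_n`: positive entries are followed
only by smaller ones and negative entries only by larger ones, so if `w` and `w·s_i` both lie in
`Área_n` and `w(i) < w(i+1)`, then `w(i) < 0 < w(i+1)`.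
-/

namespace BnPaper

/-- The generator `t`: swaps `1` and `-1`, fixing all other points. -/
def t : Equiv.Perm ℤ := Equiv.swap 1 (-1)

/-- The generator `s i`: swaps `i ↔ i+1` and `-i ↔ -(i+1)`. -/
def s (i : ℤ) : Equiv.Perm ℤ := Equiv.swap i (i + 1) * Equiv.swap (-i) (-(i + 1))

/-- The descending product `s_j · s_{j-1} ⋯ s_i` (the identity when `i > j`). -/
def desc (i j : ℕ) : Equiv.Perm ℤ :=
  ((List.range (j + 1 - i)).map (fun k => s ((j : ℤ) - (k : ℤ)))).prod

/-- The ascending product `s_i · s_{i+1} ⋯ s_j` (the identity when `i > j`). -/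
def asc (i j : ℕ) : Equiv.Perm ℤ :=
  ((List.range (j + 1 - i)).map (fun k => s ((i : ℤ) + (k : ℤ)))).prod

/-- `t_j = s_{j-1} ⋯ s_1 · t · s_1 ⋯ s_{j-1}`. -/
def tt (j : ℕ) : Equiv.Perm ℤ := desc 1 (j - 1) * t * (desc 1 (j - 1))⁻¹

/-- The Coxeter generating set `{t, s_1, …, s_{n-1}}` of `W_n`. -/
def gens (n : ℕ) : Set (Equiv.Perm ℤ) :=
  insert t {g | ∃ i : ℕ, 1 ≤ i ∧ i ≤ n - 1 ∧ g = s (i : ℤ)}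

/-- The Coxeter length: the least number of generators whose product is `w`. -/
noncomputable def len (n : ℕ) (w : Equiv.Perm ℤ) : ℕ :=
  sInf {k | ∃ l : List (Equiv.Perm ℤ), l.length = k ∧ (∀ g ∈ l, g ∈ gens n) ∧ l.prod = w}

/-- `W_n` realised as the signed permutations of `{-n, …, -1, 1, …, n}`:
permutations of `ℤ` that are odd (`w(-i) = -w(i)`) and fix everything beyond `n` in
absolute value. -/
def W (n : ℕ) : Set (Equiv.Perm ℤ) :=
  {w | (∀ i : ℤ, w (-i) = -(w i)) ∧ ∀ i : ℤ, (n : ℤ) < |i| → w i = i}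

/-- The right descent set `Des(w)`. -/
def Des (n : ℕ) (w : Equiv.Perm ℤ) : Set (Equiv.Perm ℤ) :=
  {g | g ∈ gens n ∧ len n (w * g) < len n w}

/-- The enhanced descent-set invariant
`ρ_m(w) = Des(w) ∪ {t_j : 2 ≤ j ≤ m, ℓ(w t_j) < ℓ(w)}`. -/
def rho (n m : ℕ) (w : Equiv.Perm ℤ) : Set (Equiv.Perm ℤ) :=
  Des n w ∪ {g | ∃ j : ℕ, 2 ≤ j ∧ j ≤ m ∧ g = tt j ∧ len n (w * tt j) < len n w}

/-- `Área_n`: the negative entries of the row form appear in increasing order and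
the positive entries in strictly decreasing order. -/
def Area (n : ℕ) : Set (Equiv.Perm ℤ) :=
  {w | w ∈ W n ∧ ∀ i j : ℤ, 1 ≤ i → i < j → j ≤ (n : ℤ) →
    (w i < 0 → w j < 0 → w i < w j) ∧ (0 < w i → 0 < w j → w j < w i)}

/-- The suffix relation `y ≤_e w`: `w = z · y` with `ℓ(w) = ℓ(z) + ℓ(y)`. -/
def Suf (n : ℕ) (y w : Equiv.Perm ℤ) : Prop :=
  ∃ z, z ∈ W n ∧ w = z * y ∧ len n w = len n z + len n y

/-- `a_q = (t)(s_1 t)(s_2 s_1 t) ⋯ (s_{q-1} ⋯ s_1 t)`. -/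
def aw (q : ℕ) : Equiv.Perm ℤ := ((List.range q).map (fun k => desc 1 k * t)).prod

/-- `b_q = (s_{q+1})(s_{q+2} s_{q+1}) ⋯ (s_{n-1} ⋯ s_{q+1})` (identity for `q ≥ n-1`). -/
def bw (n q : ℕ) : Equiv.Perm ℤ :=
  ((List.range (n - 1 - q)).map (fun k => desc (q + 1) (q + 1 + k))).prod

/-- `σ_{n,q} = a_q · b_q`. -/
def sig (n q : ℕ) : Equiv.Perm ℤ := aw q * bw n q

/-- `p_{n,q} = (s_{n-q} ⋯ s_1)(s_{n-q+1} ⋯ s_2) ⋯ (s_{n-1} ⋯ s_q)`,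
with `p_{n,0} = p_{n,n} = e`. -/
def p (n q : ℕ) : Equiv.Perm ℤ :=
  ((List.range q).map (fun m => desc (1 + m) (n - q + m))).prod

/-- `Π_{n,q} = (s_{n-q-1} ⋯ s_1) · t · p_{n,q}`. -/
def PiElt (n q : ℕ) : Equiv.Perm ℤ := desc 1 (n - q - 1) * t * p n q

/-- `Υ(w) = {z ∈ Área_n : Des(z) = Des(w)}`. -/
def Ups (n : ℕ) (w : Equiv.Perm ℤ) : Set (Equiv.Perm ℤ) :=
  {z | z ∈ Area n ∧ Des n z = Des n w}

/-- The parabolic subgroup `W_J = ⟨s_1, …, s_{n-1}⟩`. -/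
def WJ (n : ℕ) : Set (Equiv.Perm ℤ) :=
  ↑(Subgroup.closure {g | ∃ i : ℕ, 1 ≤ i ∧ i ≤ n - 1 ∧ g = s (i : ℤ)})

/-- The parabolic subgroup `W_K = ⟨t, s_1, …, s_{n-2}⟩`. -/
def WK (n : ℕ) : Set (Equiv.Perm ℤ) :=
  ↑(Subgroup.closure (insert t {g | ∃ i : ℕ, 1 ≤ i ∧ i ≤ n - 2 ∧ g = s (i : ℤ)}))

/-- Knuth relation of type `I_k` : `w' = w · s_{i+1}` when
`w(i+1) < w(i) < w(i+2)` or `w(i+2) < w(i) < w(i+1)`. -/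
def stepI (k : ℕ) (w w' : Equiv.Perm ℤ) : Prop :=
  ∃ i : ℤ, 1 ≤ i ∧ i ≤ (k : ℤ) - 2 ∧
    ((w (i + 1) < w i ∧ w i < w (i + 2)) ∨ (w (i + 2) < w i ∧ w i < w (i + 1))) ∧
    w' = w * s (i + 1)

/-- Knuth relation of type `II_k` : `w' = w · s_i` when
`w(i+1) < w(i+2) < w(i)` or `w(i) < w(i+2) < w(i+1)`. -/
def stepII (k : ℕ) (w w' : Equiv.Perm ℤ) : Prop :=
  ∃ i : ℤ, 1 ≤ i ∧ i ≤ (k : ℤ) - 2 ∧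
    ((w (i + 1) < w (i + 2) ∧ w (i + 2) < w i) ∨ (w i < w (i + 2) ∧ w (i + 2) < w (i + 1))) ∧
    w' = w * s i

/-- Knuth relation of type `III_k` : `w' = w · s_i` when `w(i)` and `w(i+1)` have
opposite signs. -/
def stepIII (k : ℕ) (w w' : Equiv.Perm ℤ) : Prop :=
  ∃ i : ℤ, 1 ≤ i ∧ i ≤ (k : ℤ) - 1 ∧
    ((w i < 0 ∧ 0 < w (i + 1)) ∨ (w (i + 1) < 0 ∧ 0 < w i)) ∧
    w' = w * s i


open Equiv Finset

section Generators

lemma t_apply (j : ℤ) : t j = if j = 1 then -1 else if j = -1 then 1 else j := by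
  simp [t, Equiv.swap_apply_def]

lemma s_apply {i : ℤ} (hi : 1 ≤ i) (j : ℤ) :
    s i j = if j = i then i + 1 else if j = i + 1 then i else if j = -i then -(i + 1)
      else if j = -(i + 1) then -i else j := by
  simp only [s, Perm.mul_apply, Equiv.swap_apply_def]
  split_ifs <;> omega

lemma t_apply_t (j : ℤ) : t (t j) = j := Equiv.swap_apply_self _ _ _

lemma s_apply_s {i : ℤ} (hi : 1 ≤ i) (j : ℤ) : s i (s i j) = j := by
  rw [s_apply hi, s_apply hi]
  split_ifs <;> omega

lemma t_mul_t : t * t = 1 := Perm.ext t_apply_t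

lemma s_mul_s {i : ℤ} (hi : 1 ≤ i) : s i * s i = 1 := Perm.ext (s_apply_s hi)

lemma s_ne_t {i : ℤ} (hi : 1 ≤ i) : s i ≠ t := by
  intro h
  have := congrArg (· (i + 1)) h
  simp only [s_apply hi, t_apply] at this
  split_ifs at this <;> omega

lemma s_inj {a b : ℤ} (ha : 1 ≤ a) (hb : 1 ≤ b) : s a = s b ↔ a = b := by
  refine ⟨fun h => ?_, congrArg s⟩
  have := congrArg (· a) h
  simp only [s_apply ha, s_apply hb] at this
  split_ifs at this <;> omega

variable {w : Perm ℤ} {i j : ℤ}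

lemma mul_t_apply_of_ne (h₁ : j ≠ 1) (h₂ : j ≠ -1) : (w * t) j = w j := by
  rw [Perm.mul_apply, t_apply, if_neg h₁, if_neg h₂]

lemma mul_s_apply_left (hi : 1 ≤ i) : (w * s i) i = w (i + 1) := by
  rw [Perm.mul_apply, s_apply hi, if_pos rfl]

lemma mul_s_apply_right (hi : 1 ≤ i) : (w * s i) (i + 1) = w i := by
  rw [Perm.mul_apply, s_apply hi, if_neg (by omega), if_pos rfl]

lemma mul_s_apply_of_ne (hi : 1 ≤ i) (hj : 1 ≤ j) (h₁ : j ≠ i) (h₂ : j ≠ i + 1) :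
    (w * s i) j = w j := by
  rw [Perm.mul_apply, s_apply hi]
  split_ifs <;> omega

end Generators

section SignedPermutations

variable {n : ℕ} {u v w : Perm ℤ} {i : ℤ}

lemma one_mem_W (n : ℕ) : (1 : Perm ℤ) ∈ W n := ⟨fun _ => rfl, fun _ _ => rfl⟩

lemma mul_mem_W (hu : u ∈ W n) (hv : v ∈ W n) : u * v ∈ W n :=
  ⟨fun i => by simp only [Perm.mul_apply, hv.1, hu.1],
    fun i hi => by simp only [Perm.mul_apply, hv.2 i hi, hu.2 i hi]⟩

lemma t_mem_W (hn : 1 ≤ n) : t ∈ W n := by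
  refine ⟨fun j => ?_, fun j hj => ?_⟩
  · simp only [t_apply]
    split_ifs <;> omega
  · rw [lt_abs] at hj
    rw [t_apply]
    split_ifs <;> omega

lemma s_mem_W (hi : 1 ≤ i) (hin : i + 1 ≤ n) : s i ∈ W n := by
  refine ⟨fun j => ?_, fun j hj => ?_⟩
  · simp only [s_apply hi]
    split_ifs <;> omega
  · rw [lt_abs] at hj
    rw [s_apply hi]
    split_ifs <;> omega

lemma mul_t_apply_one (hw : w ∈ W n) : (w * t) 1 = -w 1 := by
  rw [Perm.mul_apply, t_apply, if_pos rfl, hw.1]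

lemma apply_zero_of_mem_W (hw : w ∈ W n) : w 0 = 0 := by
  have := hw.1 0
  rw [neg_zero] at this
  omega

lemma apply_ne_zero_of_mem_W (hw : w ∈ W n) (hi : i ≠ 0) : w i ≠ 0 :=
  fun h => hi (w.injective (h.trans (apply_zero_of_mem_W hw).symm))

lemma apply_le_of_mem_W (hw : w ∈ W n) (hi : |i| ≤ n) : w i ≤ n := by
  by_contra! h
  have := w.injective (hw.2 (w i) (lt_of_lt_of_le h (le_abs_self _)))
  rw [abs_le] at hi
  omega

lemma eq_one_of_forall_apply_eq (hw : w ∈ W n) (h : ∀ j : ℤ, 1 ≤ j → j ≤ n → w j = j) :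
    w = 1 := by
  ext j
  rw [Perm.one_apply]
  by_cases hjn : (n : ℤ) < |j|
  · exact hw.2 j hjn
  rw [not_lt, abs_le] at hjn
  rcases lt_trichotomy j 0 with hj | rfl | hj
  · have := hw.1 (-j)
    rw [neg_neg, h (-j) (by omega) (by omega)] at this
    omega
  · exact apply_zero_of_mem_W hw
  · exact h j hj hjn.2

lemma t_mem_gens : t ∈ gens n := Set.mem_insert _ _

lemma s_mem_gens_iff (hi : 1 ≤ i) : s i ∈ gens n ↔ i + 1 ≤ n := by
  constructor
  · rintro (h | ⟨k, hk, hkn, h⟩)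
    · exact absurd h (s_ne_t hi)
    · rw [s_inj hi (by exact_mod_cast hk)] at h
      omega
  · intro hin
    exact Or.inr ⟨i.toNat, by omega, by omega, by rw [Int.toNat_of_nonneg (by omega)]⟩

lemma eq_t_or_eq_s_of_mem_gens {g : Perm ℤ} (hg : g ∈ gens n) :
    g = t ∨ ∃ i : ℤ, 1 ≤ i ∧ i + 1 ≤ n ∧ g = s i := by
  rcases hg with h | ⟨i, hi, hin, rfl⟩
  · exact Or.inl h
  · exact Or.inr ⟨i, by exact_mod_cast hi, by omega, rfl⟩

lemma mem_W_of_mem_gens (hn : 1 ≤ n) {g : Perm ℤ} (hg : g ∈ gens n) : g ∈ W n := by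
  rcases eq_t_or_eq_s_of_mem_gens hg with rfl | ⟨i, hi, hin, rfl⟩
  exacts [t_mem_W hn, s_mem_W hi hin]

lemma mul_self_of_mem_gens {g : Perm ℤ} (hg : g ∈ gens n) : g * g = 1 := by
  rcases eq_t_or_eq_s_of_mem_gens hg with rfl | ⟨i, hi, -, rfl⟩
  exacts [t_mul_t, s_mul_s hi]

end SignedPermutations

section LengthStatistic

variable {n : ℕ} {w g : Perm ℤ} {i : ℤ}

noncomputable def window (n : ℕ) : Finset ℤ := (Icc (-(n : ℤ)) n).erase 0

noncomputable def inversions (n : ℕ) (w : Perm ℤ) : Finset (ℤ × ℤ) :=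
  (window n ×ˢ window n).filter fun p => p.1 < p.2 ∧ w p.2 < w p.1

noncomputable def negCount (n : ℕ) (w : Perm ℤ) : ℕ := #((Icc (1 : ℤ) n).filter fun j => w j < 0)

noncomputable def lenStat (n : ℕ) (w : Perm ℤ) : ℕ := #(inversions n w) + negCount n w

lemma mem_window {j : ℤ} : j ∈ window n ↔ j ≠ 0 ∧ -(n : ℤ) ≤ j ∧ j ≤ n := by
  simp [window]

lemma mem_inversions {p : ℤ × ℤ} :
    p ∈ inversions n w ↔ (p.1 ∈ window n ∧ p.2 ∈ window n) ∧ p.1 < p.2 ∧ w p.2 < w p.1 := by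
  simp [inversions]

lemma apply_mem_window_of_mem_W (hw : w ∈ W n) {a : ℤ} (ha : a ∈ window n) :
    w a ∈ window n := by
  rw [mem_window] at ha ⊢
  have h₁ := apply_le_of_mem_W hw (i := a) (abs_le.2 ⟨ha.2.1, ha.2.2⟩)
  have h₂ := apply_le_of_mem_W hw (i := -a) (abs_le.2 ⟨by omega, by omega⟩)
  rw [hw.1] at h₂
  exact ⟨apply_ne_zero_of_mem_W hw ha.1, by omega, h₁⟩

lemma mem_inversions_sdiff_of_mul (hg : ∀ a, g (g a) = a)
    (hgw : ∀ a ∈ window n, g a ∈ window n) {p : ℤ × ℤ}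
    (hp : p ∈ inversions n (w * g) \ inversions n g) :
    (g p.1, g p.2) ∈ inversions n w \ inversions n g := by
  simp only [mem_sdiff, mem_inversions, Perm.mul_apply, hg] at hp ⊢
  obtain ⟨⟨⟨ha, hb⟩, hab, hwab⟩, hnot⟩ := hp
  have hgab : g p.1 < g p.2 :=
    (g.injective.ne hab.ne).lt_or_gt.resolve_right fun h => hnot ⟨⟨ha, hb⟩, hab, h⟩
  exact ⟨⟨⟨hgw _ ha, hgw _ hb⟩, hgab, hwab⟩, fun h => hab.not_gt h.2.2⟩

/-- `p ↦ (g p.1, g p.2)` matches the inversions of `w * g` and of `w` off `inversions n g`,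
while on `inversions n g` (pairs swapped by `g`) it toggles them. -/
lemma card_inversions_mul (hg : ∀ a, g (g a) = a) (hgw : ∀ a ∈ window n, g a ∈ window n)
    (hswap : ∀ p ∈ inversions n g, g p.1 = p.2) :
    #(inversions n (w * g)) + 2 * #(inversions n w ∩ inversions n g) =
      #(inversions n w) + #(inversions n g) := by
  have hwgg : w * g * g = w := by ext a; simp [hg]
  have h_sdiff : #(inversions n (w * g) \ inversions n g) = #(inversions n w \ inversions n g) :=
    card_nbij' (fun p => (g p.1, g p.2)) (fun p => (g p.1, g p.2))
      (fun p hp => mem_inversions_sdiff_of_mul hg hgw hp)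
      (fun p hp => mem_inversions_sdiff_of_mul hg hgw (by rwa [hwgg]))
      (fun p _ => by simp [hg]) (fun p _ => by simp [hg])
  have h_inter : inversions n (w * g) ∩ inversions n g = inversions n g \ inversions n w := by
    ext p
    rw [mem_inter, mem_sdiff, and_comm]
    refine and_congr_right fun hp => ?_
    have hga : g p.1 = p.2 := hswap p hp
    have hgb : g p.2 = p.1 := hga ▸ hg p.1
    obtain ⟨hmem, hlt, -⟩ := mem_inversions.1 hp
    simp only [mem_inversions, Perm.mul_apply, hga, hgb, hmem, hlt, true_and, not_lt]
    exact ⟨le_of_lt, fun h => lt_of_le_of_ne h (w.injective.ne hlt.ne)⟩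
  have h₁ := card_sdiff_add_card_inter (inversions n (w * g)) (inversions n g)
  have h₂ := card_sdiff_add_card_inter (inversions n w) (inversions n g)
  have h₃ := card_sdiff_add_card_inter (inversions n g) (inversions n w)
  rw [h_inter, h_sdiff] at h₁
  rw [inter_comm] at h₃
  omega

lemma inversions_t (hn : 1 ≤ n) : inversions n t = {(-1, 1)} := by
  ext ⟨a, b⟩
  simp only [mem_inversions, mem_window, t_apply, mem_singleton, Prod.mk.injEq]
  split_ifs <;> omega

lemma inversions_s (hi : 1 ≤ i) (hin : i + 1 ≤ n) :
    inversions n (s i) = {(i, i + 1), (-(i + 1), -i)} := by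
  ext ⟨a, b⟩
  simp only [mem_inversions, mem_window, s_apply hi, mem_insert, mem_singleton, Prod.mk.injEq]
  split_ifs <;> omega

lemma card_inversions_mul_t_of_pos (hn : 1 ≤ n) (hw : w ∈ W n) (h : 0 < w 1) :
    #(inversions n (w * t)) = #(inversions n w) + 1 := by
  have key := card_inversions_mul (w := w) t_apply_t
    (fun _ => apply_mem_window_of_mem_W (t_mem_W hn)) (by simp [inversions_t hn, t_apply])
  have hnot : ((-1 : ℤ), (1 : ℤ)) ∉ inversions n w := by
    simp [mem_inversions, hw.1 1]
    omega
  rw [inversions_t hn, inter_singleton_of_notMem hnot] at key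
  simpa using key

lemma card_inversions_mul_s_of_lt (hi : 1 ≤ i) (hin : i + 1 ≤ n) (hw : w ∈ W n)
    (h : w i < w (i + 1)) : #(inversions n (w * s i)) = #(inversions n w) + 2 := by
  have key := card_inversions_mul (w := w) (s_apply_s hi)
    (fun _ => apply_mem_window_of_mem_W (s_mem_W hi hin))
    (by
      simp only [inversions_s hi hin, mem_insert, mem_singleton]
      rintro p (rfl | rfl) <;> rw [s_apply hi] <;> split_ifs <;> omega)
  have hdisj : inversions n w ∩ {(i, i + 1), (-(i + 1), -i)} = ∅ := by
    ext p
    simp only [mem_inter, mem_inversions, mem_insert, mem_singleton, notMem_empty, iff_false]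
    rintro ⟨⟨-, -, hinv⟩, rfl | rfl⟩ <;> simp only [hw.1] at hinv <;> omega
  rw [inversions_s hi hin, hdisj, card_pair (by simp only [ne_eq, Prod.mk.injEq]; omega)] at key
  simpa using key

lemma negCount_mul_t_of_pos (hn : 1 ≤ n) (hw : w ∈ W n) (h : 0 < w 1) :
    negCount n (w * t) = negCount n w + 1 := by
  have hnot : (1 : ℤ) ∉ (Icc (1 : ℤ) n).filter fun j => w j < 0 := by simp [h.le]
  rw [negCount, negCount, ← card_insert_of_notMem hnot]
  congr 1
  ext j
  simp only [mem_filter, mem_insert, mem_Icc]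
  by_cases hj : j = 1
  · subst hj
    simp [mul_t_apply_one hw, h, hn]
  · have hj' : j ≠ -1 → (w * t) j = w j := mul_t_apply_of_ne hj
    constructor
    · rintro ⟨hjn, hneg⟩
      exact Or.inr ⟨hjn, by rwa [hj' (by omega)] at hneg⟩
    · rintro (rfl | ⟨hjn, hneg⟩)
      · exact absurd rfl hj
      · exact ⟨hjn, by rwa [hj' (by omega)]⟩

lemma negCount_mul_s (hi : 1 ≤ i) (hin : i + 1 ≤ n) : negCount n (w * s i) = negCount n w := by
  have hmaps : ∀ j ∈ Icc (1 : ℤ) n, s i j ∈ Icc (1 : ℤ) n := fun j hj => by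
    rw [mem_Icc] at hj ⊢
    rw [s_apply hi]
    split_ifs <;> omega
  refine card_nbij' (s i) (s i) (fun j hj => ?_) (fun j hj => ?_)
    (fun j _ => s_apply_s hi j) (fun j _ => s_apply_s hi j)
  · rw [mem_coe, mem_filter] at hj ⊢
    exact ⟨hmaps j hj.1, hj.2⟩
  · rw [mem_coe, mem_filter] at hj ⊢
    exact ⟨hmaps j hj.1, by rw [Perm.mul_apply, s_apply_s hi]; exact hj.2⟩

lemma lenStat_one : lenStat n 1 = 0 := by
  have h₁ : inversions n 1 = ∅ := by
    ext p
    simp only [mem_inversions, Perm.one_apply, notMem_empty, iff_false]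
    omega
  have h₂ : negCount n 1 = 0 := by
    rw [negCount, card_eq_zero, filter_eq_empty_iff]
    intro j hj
    rw [mem_Icc] at hj
    simp only [Perm.one_apply]
    omega
  simp [lenStat, h₁, h₂]

lemma lenStat_mul_t_of_pos (hn : 1 ≤ n) (hw : w ∈ W n) (h : 0 < w 1) :
    lenStat n (w * t) = lenStat n w + 2 := by
  rw [lenStat, lenStat, card_inversions_mul_t_of_pos hn hw h, negCount_mul_t_of_pos hn hw h]
  omega

lemma lenStat_mul_s_of_lt (hi : 1 ≤ i) (hin : i + 1 ≤ n) (hw : w ∈ W n)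
    (h : w i < w (i + 1)) : lenStat n (w * s i) = lenStat n w + 2 := by
  rw [lenStat, lenStat, card_inversions_mul_s_of_lt hi hin hw h, negCount_mul_s hi hin]
  omega

lemma lenStat_mul_t_of_neg (hn : 1 ≤ n) (hw : w ∈ W n) (h : w 1 < 0) :
    lenStat n w = lenStat n (w * t) + 2 := by
  have := lenStat_mul_t_of_pos hn (mul_mem_W hw (t_mem_W hn)) (by rw [mul_t_apply_one hw]; omega)
  rwa [mul_assoc, t_mul_t, mul_one] at this

lemma lenStat_mul_s_of_gt (hi : 1 ≤ i) (hin : i + 1 ≤ n) (hw : w ∈ W n)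
    (h : w (i + 1) < w i) : lenStat n w = lenStat n (w * s i) + 2 := by
  have := lenStat_mul_s_of_lt hi hin (mul_mem_W hw (s_mem_W hi hin))
    (by rwa [mul_s_apply_left hi, mul_s_apply_right hi])
  rwa [mul_assoc, s_mul_s hi, mul_one] at this

lemma lenStat_mul_le (hn : 1 ≤ n) (hw : w ∈ W n) (hg : g ∈ gens n) :
    lenStat n (w * g) ≤ lenStat n w + 2 := by
  rcases eq_t_or_eq_s_of_mem_gens hg with rfl | ⟨i, hi, hin, rfl⟩
  · rcases (apply_ne_zero_of_mem_W hw one_ne_zero).lt_or_gt with h | h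
    · linarith [lenStat_mul_t_of_neg hn hw h]
    · exact (lenStat_mul_t_of_pos hn hw h).le
  · rcases (w.injective.ne (show i ≠ i + 1 by omega)).lt_or_gt with h | h
    · exact (lenStat_mul_s_of_lt hi hin hw h).le
    · linarith [lenStat_mul_s_of_gt hi hin hw h]

end LengthStatistic

section Length

variable {n : ℕ} {w : Perm ℤ} {i : ℤ}

lemma exists_descent (hw : w ∈ W n) (hne : w ≠ 1) :
    w 1 < 0 ∨ ∃ i : ℤ, 1 ≤ i ∧ i + 1 ≤ n ∧ w (i + 1) < w i := by
  by_contra! hasc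
  obtain ⟨hpos, hmono⟩ := hasc
  have hstrict : ∀ k : ℤ, 1 ≤ k → k + 1 ≤ n → w k < w (k + 1) := fun k hk hkn =>
    lt_of_le_of_ne (hmono k hk hkn) (w.injective.ne (by omega))
  have hlow : ∀ j : ℤ, 1 ≤ j → j ≤ n → j ≤ w j := by
    intro j hj
    induction j, hj using Int.leInduction with
    | base => intro _; have := apply_ne_zero_of_mem_W hw one_ne_zero; omega
    | succ k hk ih => intro hkn; have := hstrict k hk hkn; have := ih (by omega); omega
  have hhigh : ∀ j : ℤ, j ≤ n → 1 ≤ j → w j ≤ j := by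
    intro j hj
    induction j, hj using Int.leInductionDown with
    | base => intro _; exact apply_le_of_mem_W hw (by rw [abs_le]; omega)
    | pred k hk ih =>
      intro hk1
      have := hstrict (k - 1) hk1 (by omega)
      rw [sub_add_cancel] at this
      have := ih (by omega)
      omega
  exact hne (eq_one_of_forall_apply_eq hw fun j hj hjn =>
    le_antisymm (hhigh j hjn hj) (hlow j hj hjn))

lemma lenStat_mul_prod_le (hn : 1 ≤ n) {l : List (Perm ℤ)} (hl : ∀ g ∈ l, g ∈ gens n)
    {u : Perm ℤ} (hu : u ∈ W n) : lenStat n (u * l.prod) ≤ lenStat n u + 2 * l.length := by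
  induction l generalizing u with
  | nil => simp
  | cons g l ih =>
    have hg := hl g List.mem_cons_self
    have h₁ := ih (fun x hx => hl x (List.mem_cons_of_mem _ hx))
      (mul_mem_W hu (mem_W_of_mem_gens hn hg))
    have h₂ := lenStat_mul_le hn hu hg
    rw [List.prod_cons, ← mul_assoc, List.length_cons]
    omega

lemma exists_word_of_mem_W (hn : 1 ≤ n) (hw : w ∈ W n) :
    ∃ l : List (Perm ℤ), (∀ g ∈ l, g ∈ gens n) ∧ l.prod = w ∧ 2 * l.length = lenStat n w := by
  induction hk : lenStat n w using Nat.strong_induction_on generalizing w with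
  | _ k ih =>
    by_cases hone : w = 1
    · subst hone
      exact ⟨[], by simp, rfl, by simp [← hk, lenStat_one]⟩
    obtain ⟨g, hg, hdrop⟩ : ∃ g ∈ gens n, lenStat n w = lenStat n (w * g) + 2 := by
      rcases exists_descent hw hone with h | ⟨i, hi, hin, h⟩
      · exact ⟨t, t_mem_gens, lenStat_mul_t_of_neg hn hw h⟩
      · exact ⟨s i, (s_mem_gens_iff hi).2 hin, lenStat_mul_s_of_gt hi hin hw h⟩
    obtain ⟨l, hl, hprod, hlen⟩ :=
      ih _ (by omega) (mul_mem_W hw (mem_W_of_mem_gens hn hg)) rfl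
    refine ⟨l ++ [g], ?_, ?_, ?_⟩
    · simpa [or_imp, forall_and] using ⟨hl, hg⟩
    · rw [List.prod_append, hprod, List.prod_singleton, mul_assoc, mul_self_of_mem_gens hg,
        mul_one]
    · rw [List.length_append, List.length_singleton]
      omega

lemma two_mul_len_eq_lenStat (hn : 1 ≤ n) (hw : w ∈ W n) : 2 * len n w = lenStat n w := by
  obtain ⟨l, hl, hprod, hlen⟩ := exists_word_of_mem_W hn hw
  have hmem : l.length ∈ {k | ∃ l : List (Perm ℤ), l.length = k ∧ (∀ g ∈ l, g ∈ gens n) ∧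
      l.prod = w} := ⟨l, rfl, hl, hprod⟩
  obtain ⟨l₀, hlen₀, hl₀, hprod₀⟩ := Nat.sInf_mem ⟨_, hmem⟩
  have hle : len n w ≤ l.length := Nat.sInf_le hmem
  have hge := lenStat_mul_prod_le hn hl₀ (one_mem_W n)
  rw [one_mul, hprod₀, lenStat_one, hlen₀] at hge
  change lenStat n w ≤ 0 + 2 * len n w at hge
  omega

lemma len_lt_len_mul_t_iff (hn : 1 ≤ n) (hw : w ∈ W n) : len n w < len n (w * t) ↔ 0 < w 1 := by
  have h₁ := two_mul_len_eq_lenStat hn hw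
  have h₂ := two_mul_len_eq_lenStat hn (mul_mem_W hw (t_mem_W hn))
  rcases (apply_ne_zero_of_mem_W hw one_ne_zero).lt_or_gt with h | h
  · have := lenStat_mul_t_of_neg hn hw h
    omega
  · have := lenStat_mul_t_of_pos hn hw h
    omega

lemma len_lt_len_mul_s_iff (hi : 1 ≤ i) (hin : i + 1 ≤ n) (hw : w ∈ W n) :
    len n w < len n (w * s i) ↔ w i < w (i + 1) := by
  have hn : 1 ≤ n := by omega
  have h₁ := two_mul_len_eq_lenStat hn hw
  have h₂ := two_mul_len_eq_lenStat hn (mul_mem_W hw (s_mem_W hi hin))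
  rcases (w.injective.ne (show i ≠ i + 1 by omega)).lt_or_gt with h | h
  · have := lenStat_mul_s_of_lt hi hin hw h
    omega
  · have := lenStat_mul_s_of_gt hi hin hw h
    omega

lemma len_mul_t_lt_iff (hn : 1 ≤ n) (hw : w ∈ W n) : len n (w * t) < len n w ↔ w 1 < 0 := by
  simpa [mul_assoc, t_mul_t, mul_t_apply_one hw] using
    len_lt_len_mul_t_iff hn (mul_mem_W hw (t_mem_W hn))

lemma len_mul_s_lt_iff (hi : 1 ≤ i) (hin : i + 1 ≤ n) (hw : w ∈ W n) :
    len n (w * s i) < len n w ↔ w (i + 1) < w i := by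
  simpa [mul_assoc, s_mul_s hi, mul_s_apply_left hi, mul_s_apply_right hi] using
    len_lt_len_mul_s_iff hi hin (mul_mem_W hw (s_mem_W hi hin))

end Length

section Descents

variable {n : ℕ} {w : Perm ℤ} {i : ℤ}

lemma Des_subset_gens : Des n w ⊆ gens n := fun _ h => h.1

lemma t_mem_Des_iff (hn : 1 ≤ n) (hw : w ∈ W n) : t ∈ Des n w ↔ w 1 < 0 :=
  (and_iff_right t_mem_gens).trans (len_mul_t_lt_iff hn hw)

lemma s_mem_Des_iff (hi : 1 ≤ i) (hin : i + 1 ≤ n) (hw : w ∈ W n) :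
    s i ∈ Des n w ↔ w (i + 1) < w i :=
  (and_iff_right ((s_mem_gens_iff hi).2 hin)).trans (len_mul_s_lt_iff hi hin hw)

lemma Des_eq_of_forall (hn : 1 ≤ n) (hw : w ∈ W n) {A : Set (Perm ℤ)} (hA : A ⊆ gens n)
    (ht : t ∈ A ↔ w 1 < 0) (hs : ∀ j : ℤ, 1 ≤ j → j + 1 ≤ n → (s j ∈ A ↔ w (j + 1) < w j)) :
    Des n w = A := by
  have key : ∀ g ∈ gens n, g ∈ Des n w ↔ g ∈ A := by
    intro g hg
    rcases eq_t_or_eq_s_of_mem_gens hg with rfl | ⟨j, hj, hjn, rfl⟩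
    · rw [t_mem_Des_iff hn hw, ht]
    · rw [s_mem_Des_iff hj hjn hw, hs j hj hjn]
  ext g
  exact ⟨fun h => (key g h.1).1 h, fun h => (key g (hA h)).2 h⟩

end Descents

section Area

variable {n : ℕ} {w : Perm ℤ} {i j : ℤ}

lemma Area_lt_apply_of_neg (hw : w ∈ Area n) (hi : 1 ≤ i) (hij : i < j) (hjn : j ≤ n)
    (h : w i < 0) : w i < w j := by
  rcases (apply_ne_zero_of_mem_W hw.1 (show j ≠ 0 by omega)).lt_or_gt with hj | hj
  · exact (hw.2 i j hi hij hjn).1 h hj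
  · omega

lemma Area_apply_lt_of_pos (hw : w ∈ Area n) (hi : 1 ≤ i) (hij : i < j) (hjn : j ≤ n)
    (h : 0 < w i) : w j < w i := by
  rcases (apply_ne_zero_of_mem_W hw.1 (show j ≠ 0 by omega)).lt_or_gt with hj | hj
  · omega
  · exact (hw.2 i j hi hij hjn).2 h hj

lemma Area_neg_and_pos_of_mul_s_mem (hw : w ∈ Area n) (hws : w * s i ∈ Area n) (hi : 1 ≤ i)
    (hin : i + 1 ≤ n) (h : w i < w (i + 1)) : w i < 0 ∧ 0 < w (i + 1) := by
  constructor
  · by_contra! hle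
    have hpos := lt_of_le_of_ne hle (apply_ne_zero_of_mem_W hw.1 (show i ≠ 0 by omega)).symm
    have := Area_apply_lt_of_pos hw hi (lt_add_one i) hin hpos
    omega
  · by_contra! hle
    have hneg := lt_of_le_of_ne hle (apply_ne_zero_of_mem_W hw.1 (show i + 1 ≠ 0 by omega))
    have := Area_lt_apply_of_neg hws hi (lt_add_one i) hin (by rwa [mul_s_apply_left hi])
    rw [mul_s_apply_left hi, mul_s_apply_right hi] at this
    omega

lemma Area_lt_apply_pred_iff (hw : w ∈ Area n) (hws : w * s i ∈ Area n) (hi : 2 ≤ i)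
    (hin : i + 1 ≤ n) (hneg : w i < 0) (hpos : 0 < w (i + 1)) :
    w (i + 1) < w (i - 1) ↔ w i < w (i - 1) := by
  refine ⟨fun h => by omega, fun h => ?_⟩
  have hpred : 0 < w (i - 1) := by
    by_contra! hle
    have := Area_lt_apply_of_neg hw (by omega) (sub_one_lt i) (by omega)
      (lt_of_le_of_ne hle (apply_ne_zero_of_mem_W hw.1 (show i - 1 ≠ 0 by omega)))
    omega
  have hfix : (w * s i) (i - 1) = w (i - 1) := mul_s_apply_of_ne (by omega) (by omega) (by omega)
    (by omega)
  have := Area_apply_lt_of_pos hws (by omega) (sub_one_lt i) (by omega) (by rwa [hfix])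
  rwa [hfix, mul_s_apply_left (by omega)] at this

end Area

section DescentSets

variable {n : ℕ} {w : Perm ℤ} {i : ℤ}

lemma s_one_mem_Des (hn : 2 ≤ n) (hw : w ∈ Area n) (h : 0 < w 1) : s 1 ∈ Des n w :=
  (s_mem_Des_iff le_rfl (by omega) hw.1).2
    (Area_apply_lt_of_pos hw le_rfl (lt_add_one 1) (by omega) h)

lemma s_add_one_mem_Des (hw : w ∈ Area n) (hws : w * s i ∈ Area n) (hi : 1 ≤ i)
    (hin : i + 2 ≤ n) (h : w i < w (i + 1)) : s (i + 1) ∈ Des n w := by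
  obtain ⟨-, hpos⟩ := Area_neg_and_pos_of_mul_s_mem hw hws hi (by omega) h
  rw [s_mem_Des_iff (by omega) (by omega) hw.1, add_assoc, one_add_one_eq_two]
  exact Area_apply_lt_of_pos hw (by omega) (by omega) hin hpos

lemma Des_mul_t (hn : 2 ≤ n) (hw : w ∈ Area n) (hwt : w * t ∈ Area n) (h : 0 < w 1) :
    Des n (w * t) = (Des n w ∪ {t}) \ {s 1} := by
  have hn1 : 1 ≤ n := by omega
  refine Des_eq_of_forall hn1 hwt.1 (Set.sdiff_subset.trans
    (Set.union_subset Des_subset_gens (Set.singleton_subset_iff.2 t_mem_gens))) ?_ ?_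
  · simp only [Set.mem_sdiff, Set.mem_union, Set.mem_singleton_iff, mul_t_apply_one hw.1,
      (s_ne_t le_rfl).symm]
    simp only [or_true, not_false_eq_true, and_self, true_iff]
    omega
  · intro j hj hjn
    simp only [Set.mem_sdiff, Set.mem_union, Set.mem_singleton_iff, s_mem_Des_iff hj hjn hw.1,
      s_ne_t hj, s_inj hj le_rfl, or_false]
    rcases eq_or_ne j 1 with rfl | hj1
    · have := Area_lt_apply_of_neg hwt le_rfl (lt_add_one 1) (by omega)
        (by rw [mul_t_apply_one hw.1]; omega)
      rw [mul_t_apply_one hw.1] at this ⊢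
      omega
    · rw [mul_t_apply_of_ne hj1 (by omega), mul_t_apply_of_ne (by omega) (by omega)]
      tauto

lemma Des_mul_s_one (hn : 2 ≤ n) (hw : w ∈ Area n) (hws : w * s 1 ∈ Area n) (h : w 1 < w 2) :
    Des n (w * s 1) = (Des n w ∪ {s 1}) \ {t, s 2} := by
  have hn1 : 1 ≤ n := by omega
  have hn2 : (1 : ℤ) + 1 ≤ n := by omega
  obtain ⟨hneg, hpos⟩ := Area_neg_and_pos_of_mul_s_mem hw hws le_rfl hn2 h
  have e₁ : (w * s 1) 1 = w 2 := mul_s_apply_left le_rfl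
  have e₂ : (w * s 1) 2 = w 1 := mul_s_apply_right le_rfl
  refine Des_eq_of_forall hn1 hws.1 (Set.sdiff_subset.trans
    (Set.union_subset Des_subset_gens (Set.singleton_subset_iff.2 ((s_mem_gens_iff le_rfl).2 hn2))))
    ?_ ?_
  · simp only [Set.mem_sdiff, Set.mem_insert_iff, Set.mem_singleton_iff, true_or,
      not_true_eq_false, and_false, false_iff, not_lt, e₁]
    exact hpos.le
  · intro j hj hjn
    simp only [Set.mem_sdiff, Set.mem_union, Set.mem_insert_iff, Set.mem_singleton_iff,
      s_mem_Des_iff hj hjn hw.1, s_ne_t hj, s_inj hj le_rfl, s_inj hj one_le_two, false_or]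
    rcases (show j = 1 ∨ j = 2 ∨ 3 ≤ j by omega) with rfl | rfl | hj3
    · norm_num [e₁, e₂, h]
    · have := Area_lt_apply_of_neg hw le_rfl (show (1 : ℤ) < 3 by norm_num) hjn hneg
      rw [show (2 : ℤ) + 1 = 3 by norm_num, e₂,
        mul_s_apply_of_ne le_rfl (by omega) (by omega) (by omega)]
      omega
    · rw [mul_s_apply_of_ne le_rfl (by omega) (by omega) (by omega),
        mul_s_apply_of_ne le_rfl (by omega) (by omega) (by omega)]
      omega

lemma Des_mul_s (hi : 2 ≤ i) (hin : i + 1 ≤ n) (hw : w ∈ Area n) (hws : w * s i ∈ Area n)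
    (h : w i < w (i + 1)) : Des n (w * s i) = (Des n w ∪ {s i}) \ {s (i + 1)} := by
  have hn1 : 1 ≤ n := by omega
  have hi1 : 1 ≤ i := by omega
  obtain ⟨hneg, hpos⟩ := Area_neg_and_pos_of_mul_s_mem hw hws hi1 hin h
  refine Des_eq_of_forall hn1 hws.1 (Set.sdiff_subset.trans
    (Set.union_subset Des_subset_gens (Set.singleton_subset_iff.2 ((s_mem_gens_iff hi1).2 hin))))
    ?_ ?_
  · simp only [Set.mem_sdiff, Set.mem_union, Set.mem_singleton_iff, t_mem_Des_iff hn1 hw.1,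
      (s_ne_t hi1).symm, (s_ne_t (show 1 ≤ i + 1 by omega)).symm, or_false, not_false_eq_true,
      and_true]
    rw [mul_s_apply_of_ne hi1 le_rfl (by omega) (by omega)]
  · intro j hj hjn
    simp only [Set.mem_sdiff, Set.mem_union, Set.mem_singleton_iff, s_mem_Des_iff hj hjn hw.1,
      s_inj hj hi1, s_inj hj (show 1 ≤ i + 1 by omega)]
    rcases (show j = i - 1 ∨ j = i ∨ j = i + 1 ∨ j + 1 < i ∨ i + 1 < j by omega) with
      rfl | rfl | rfl | hfar | hfar
    · rw [sub_add_cancel, mul_s_apply_left hi1, mul_s_apply_of_ne hi1 hj (by omega) (by omega),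
        Area_lt_apply_pred_iff hw hws hi hin hneg hpos]
      omega
    · rw [mul_s_apply_left hi1, mul_s_apply_right hi1]
      simpa using h
    · have := Area_lt_apply_of_neg hw hi1 (show i < i + 1 + 1 by omega) hjn hneg
      rw [mul_s_apply_right hi1, mul_s_apply_of_ne hi1 (by omega) (by omega) (by omega)]
      omega
    all_goals
      rw [mul_s_apply_of_ne hi1 hj (by omega) (by omega),
        mul_s_apply_of_ne hi1 (by omega) (by omega) (by omega)]
      omega

end DescentSets

theorem statement5 (n : ℕ) (hn : 3 ≤ n) (w : Equiv.Perm ℤ) (hw : w ∈ Area n) :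
    (len n w < len n (w * t) → w * t ∈ Area n →
        s 1 ∈ Des n w ∧ Des n (w * t) = (Des n w ∪ {t}) \ {s 1})
  ∧ (∀ i : ℕ, 1 ≤ i → i ≤ n - 2 → len n w < len n (w * s (i : ℤ)) →
        w * s (i : ℤ) ∈ Area n → s ((i : ℤ) + 1) ∈ Des n w)
  ∧ (len n w < len n (w * s 1) → w * s 1 ∈ Area n →
        Des n (w * s 1) = (Des n w ∪ {s 1}) \ {t, s 2})
  ∧ (∀ i : ℕ, 2 ≤ i → i ≤ n - 2 → len n w < len n (w * s (i : ℤ)) →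
        w * s (i : ℤ) ∈ Area n →
        Des n (w * s (i : ℤ)) = (Des n w ∪ {s (i : ℤ)}) \ {s ((i : ℤ) + 1)})
  ∧ (len n w < len n (w * s ((n : ℤ) - 1)) → w * s ((n : ℤ) - 1) ∈ Area n →
        Des n (w * s ((n : ℤ) - 1)) = Des n w ∪ {s ((n : ℤ) - 1)}) := by
  have hn1 : 1 ≤ n := by omega
  refine ⟨fun hl hwt => ?_, fun i hi hin hl hws => ?_, fun hl hws => ?_,
    fun i hi hin hl hws => ?_, fun hl hws => ?_⟩
  · have h := (len_lt_len_mul_t_iff hn1 hw.1).1 hl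
    exact ⟨s_one_mem_Des (by omega) hw h, Des_mul_t (by omega) hw hwt h⟩
  · exact s_add_one_mem_Des hw hws (by omega) (by omega)
      ((len_lt_len_mul_s_iff (by omega) (by omega) hw.1).1 hl)
  · exact Des_mul_s_one (by omega) hw hws ((len_lt_len_mul_s_iff le_rfl (by omega) hw.1).1 hl)
  · exact Des_mul_s (by omega) (by omega) hw hws
      ((len_lt_len_mul_s_iff (by omega) (by omega) hw.1).1 hl)
  · rw [Des_mul_s (by omega) (by omega) hw hws
      ((len_lt_len_mul_s_iff (by omega) (by omega) hw.1).1 hl), Set.sdiff_singleton_eq_self]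
    rintro (h | h)
    · have := (s_mem_gens_iff (by omega)).1 (Des_subset_gens h)
      omega
    · have := (s_inj (by omega) (by omega)).1 h
      omega

end BnPaper
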